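/- Consider a two-polygon configuration with n = 2 (so λ = 4 and r = Γ₂/Γ₁). (a) If r > 0, then equation (1) has exactly two solutions x > 0 and equation (2) has exactly one solution x > 0. (b) If r < 0 and r ≠ −1, then equation (1) has exactly one solution x > 0, and this solution is different from 1, while equation (2) has exactly two solutions x > 0. Consequently, for n = 2 and same-sign vorticities there are exactly two relative equilibria with argument of s₂/s₁ equal to 2Kπ/n and exactly one with argument 2(K+1/2)π/n, while for opposite-sign vorticities with Γ₁ + Γ₂ ≠ 0 there are exactly one and exactly two, respectively. -/
import Mathlib


/-- Equation (1) for two concentric regular `n`-gons: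
`(x² − (r + λ))(xⁿ − (λr + 1)) = λ(r² + λr + 1)`, with `λ = 2n/(n−1)` and
`r = Γ₂/Γ₁`; its solutions `x > 0` (with `x ≠ 1` if `r = −1`) correspond
bijectively to the relative equilibria with argument of `s₂/s₁` equal to `2Kπ/n`. -/
def EqOne (n : ℕ) (lam r x : ℝ) : Prop :=
  (x ^ 2 - (r + lam)) * (x ^ n - (lam * r + 1)) = lam * (r ^ 2 + lam * r + 1)

/-- Equation (2): `(x² − (r + λ))(xⁿ + (λr + 1)) = −λ(r² + λr + 1)`; its solutions
`x > 0` correspond bijectively to the relative equilibria with argument of `s₂/s₁`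
equal to `2(K+1/2)π/n`. -/
def EqTwo (n : ℕ) (lam r x : ℝ) : Prop :=
  (x ^ 2 - (r + lam)) * (x ^ n + (lam * r + 1)) = -(lam * (r ^ 2 + lam * r + 1))

lemma pos_root_eq_sqrt {x y : ℝ} (hx : 0 < x) (h : x ^ 2 = y) : x = Real.sqrt y := by
  rw [← h, Real.sqrt_sq hx.le]

lemma quartic_one_pos (b c : ℝ) (hc : c < 0) :
    ∃! x : ℝ, 0 < x ∧ x ^ 4 + b * x ^ 2 + c = 0 := by
  have hD : 0 < b ^ 2 - 4 * c := by nlinarith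
  set s := Real.sqrt (b ^ 2 - 4 * c) with hs
  have hs2 : s ^ 2 = b ^ 2 - 4 * c := Real.sq_sqrt hD.le
  have hs0 : 0 ≤ s := Real.sqrt_nonneg _
  have hsb : -b < s := by nlinarith
  have hsb' : b < s := by nlinarith
  have hy : 0 < (-b + s) / 2 := by linarith
  refine ⟨Real.sqrt ((-b + s) / 2), ⟨Real.sqrt_pos.mpr hy, ?_⟩, ?_⟩
  · have h2 : (Real.sqrt ((-b + s) / 2)) ^ 2 = (-b + s) / 2 := Real.sq_sqrt hy.le
    have h4 : (Real.sqrt ((-b + s) / 2)) ^ 4 = ((-b + s) / 2) ^ 2 := by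
      rw [show (4 : ℕ) = 2 * 2 from rfl, pow_mul, h2]
    rw [h4, h2]; nlinarith
  · rintro x ⟨hx, hxe⟩
    have hfac : (x ^ 2 - (-b + s) / 2) * (x ^ 2 - (-b - s) / 2) = 0 := by nlinarith
    rcases mul_eq_zero.mp hfac with h | h
    · exact pos_root_eq_sqrt hx (by linarith)
    · nlinarith [sq_nonneg x]

lemma quartic_two_pos (b c : ℝ) (hb : b < 0) (hc : 0 < c) (hD : 0 < b ^ 2 - 4 * c) :
    {x : ℝ | 0 < x ∧ x ^ 4 + b * x ^ 2 + c = 0}.encard = 2 := by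
  set s := Real.sqrt (b ^ 2 - 4 * c) with hs
  have hs2 : s ^ 2 = b ^ 2 - 4 * c := Real.sq_sqrt hD.le
  have hs0 : 0 < s := Real.sqrt_pos.mpr hD
  have hsb : s < -b := by nlinarith
  have hy1 : 0 < (-b + s) / 2 := by linarith
  have hy2 : 0 < (-b - s) / 2 := by linarith
  have hset : {x : ℝ | 0 < x ∧ x ^ 4 + b * x ^ 2 + c = 0}
      = {Real.sqrt ((-b + s) / 2), Real.sqrt ((-b - s) / 2)} := by
    ext x
    simp only [Set.mem_setOf_eq, Set.mem_insert_iff, Set.mem_singleton_iff]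
    constructor
    · rintro ⟨hx, hxe⟩
      have hfac : (x ^ 2 - (-b + s) / 2) * (x ^ 2 - (-b - s) / 2) = 0 := by nlinarith
      rcases mul_eq_zero.mp hfac with h | h
      · exact Or.inl (pos_root_eq_sqrt hx (by linarith))
      · exact Or.inr (pos_root_eq_sqrt hx (by linarith))
    · rintro (rfl | rfl)
      · have h2 : (Real.sqrt ((-b + s) / 2)) ^ 2 = (-b + s) / 2 := Real.sq_sqrt hy1.le
        refine ⟨Real.sqrt_pos.mpr hy1, ?_⟩
        have h4 : (Real.sqrt ((-b + s) / 2)) ^ 4 = ((-b + s) / 2) ^ 2 := by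
          rw [show (4 : ℕ) = 2 * 2 from rfl, pow_mul, h2]
        rw [h4, h2]; nlinarith
      · have h2 : (Real.sqrt ((-b - s) / 2)) ^ 2 = (-b - s) / 2 := Real.sq_sqrt hy2.le
        refine ⟨Real.sqrt_pos.mpr hy2, ?_⟩
        have h4 : (Real.sqrt ((-b - s) / 2)) ^ 4 = ((-b - s) / 2) ^ 2 := by
          rw [show (4 : ℕ) = 2 * 2 from rfl, pow_mul, h2]
        rw [h4, h2]; nlinarith
  rw [hset, Set.encard_pair]
  intro heq
  have h1 : (Real.sqrt ((-b + s) / 2)) ^ 2 = (-b + s) / 2 := Real.sq_sqrt hy1.le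
  have h2 : (Real.sqrt ((-b - s) / 2)) ^ 2 = (-b - s) / 2 := Real.sq_sqrt hy2.le
  rw [heq, h2] at h1
  linarith

theorem two_polygon_count_n_eq_two
    (Γ₁ Γ₂ : ℝ) (hΓ₁ : Γ₁ ≠ 0) (hΓ₂ : Γ₂ ≠ 0)
    (r : ℝ) (hr : r = Γ₂ / Γ₁)
    (lam : ℝ) (hlam : lam = 2 * 2 / ((2 : ℝ) - 1)) :
    (0 < r →
      {x : ℝ | 0 < x ∧ EqOne 2 lam r x}.encard = 2
      ∧ (∃! x : ℝ, 0 < x ∧ EqTwo 2 lam r x))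
    ∧ (r < 0 → r ≠ -1 →
      (∃! x : ℝ, 0 < x ∧ EqOne 2 lam r x)
      ∧ (∀ x : ℝ, 0 < x → EqOne 2 lam r x → x ≠ 1)
      ∧ {x : ℝ | 0 < x ∧ EqTwo 2 lam r x}.encard = 2) := by
  have hl4 : lam = 4 := by rw [hlam]; norm_num
  subst hl4
  have hone : ∀ x : ℝ, EqOne 2 4 r x ↔ x ^ 4 + (-(5 * (r + 1))) * x ^ 2 + r = 0 := by
    intro x
    unfold EqOne
    constructor <;> intro h <;> linear_combination h
  have htwo : ∀ x : ℝ, EqTwo 2 4 r x ↔ x ^ 4 + (3 * (r - 1)) * x ^ 2 + (-r) = 0 := by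
    intro x
    unfold EqTwo
    constructor <;> intro h <;> linear_combination h
  constructor
  · intro hrpos
    constructor
    · have hset : {x : ℝ | 0 < x ∧ EqOne 2 4 r x}
          = {x : ℝ | 0 < x ∧ x ^ 4 + (-(5 * (r + 1))) * x ^ 2 + r = 0} := by
        ext x; simp only [Set.mem_setOf_eq, hone]
      rw [hset]
      exact quartic_two_pos _ _ (by linarith) hrpos (by nlinarith)
    · refine (existsUnique_congr fun x => ?_).mpr (quartic_one_pos (3 * (r - 1)) (-r) (by linarith))
      exact and_congr_right fun _ => htwo x
  · intro hrneg hrne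
    refine ⟨?_, ?_, ?_⟩
    · refine (existsUnique_congr fun x => ?_).mpr (quartic_one_pos (-(5 * (r + 1))) r hrneg)
      exact and_congr_right fun _ => hone x
    · intro x hx hE hx1
      subst hx1
      rw [hone] at hE
      apply hrne
      linarith
    · have hset : {x : ℝ | 0 < x ∧ EqTwo 2 4 r x}
          = {x : ℝ | 0 < x ∧ x ^ 4 + (3 * (r - 1)) * x ^ 2 + (-r) = 0} := by
        ext x; simp only [Set.mem_setOf_eq, htwo]
      rw [hset]
      exact quartic_two_pos _ _ (by linarith) (by linarith) (by nlinarith)
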